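/- Let H be a ≤-hypergroupoid. If A is a prime ideal of H, then the characteristic function f_A is a fuzzy prime ideal of H. -/

import Mathlib

/-- The induced operation `A*B = ⋃_{(a,b) ∈ A×B} a∘b` on subsets of a hypergroupoid. -/
def hProd {H : Type*} (circ : H → H → Set H) (A B : Set H) : Set H :=
  {x | ∃ a ∈ A, ∃ b ∈ B, x ∈ circ a b}

/-- A (nonempty) subset `A` is a left ideal of the ≤-hypergroupoid:
`H*A ⊆ A` and `A` is downward closed under `le`. -/
def IsLeftIdeal {H : Type*} (circ : H → H → Set H) (le : H → H → Prop) (A : Set H) : Prop :=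
  A.Nonempty ∧ hProd circ Set.univ A ⊆ A ∧ ∀ a ∈ A, ∀ b : H, le b a → b ∈ A

def IsRightIdeal {H : Type*} (circ : H → H → Set H) (le : H → H → Prop) (A : Set H) : Prop :=
  A.Nonempty ∧ hProd circ A Set.univ ⊆ A ∧ ∀ a ∈ A, ∀ b : H, le b a → b ∈ A

def IsIdeal {H : Type*} (circ : H → H → Set H) (le : H → H → Prop) (A : Set H) : Prop :=
  IsLeftIdeal circ le A ∧ IsRightIdeal circ le A

def IsSubgroupoid {H : Type*} (circ : H → H → Set H) (A : Set H) : Prop :=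
  A.Nonempty ∧ hProd circ A A ⊆ A

def IsPrimeSubset {H : Type*} (circ : H → H → Set H) (I : Set H) : Prop :=
  I.Nonempty ∧ (∀ a b : H, circ a b ⊆ I → a ∈ I ∨ b ∈ I) ∧
    (∀ a b : H, circ a b ⊆ I ∨ circ a b ∩ I = ∅)

def IsPrimeIdeal {H : Type*} (circ : H → H → Set H) (le : H → H → Prop) (A : Set H) : Prop :=
  IsIdeal circ le A ∧ IsPrimeSubset circ A

def IsSemiprimeSubset {H : Type*} (circ : H → H → Set H) (I : Set H) : Prop :=
  I.Nonempty ∧ (∀ a : H, circ a a ⊆ I → a ∈ I) ∧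
    (∀ a : H, circ a a ⊆ I ∨ circ a a ∩ I = ∅)

def IsSemiprimeIdeal {H : Type*} (circ : H → H → Set H) (le : H → H → Prop) (A : Set H) : Prop :=
  IsIdeal circ le A ∧ IsSemiprimeSubset circ A

/-- A fuzzy subset of `H` is a map into `[0,1]`. -/
def IsFuzzySubset {H : Type*} (f : H → ℝ) : Prop := ∀ x, f x ∈ Set.Icc (0 : ℝ) 1

open Classical in
/-- The characteristic function of a subset. -/
noncomputable def charFun {H : Type*} (A : Set H) : H → ℝ := fun x => if x ∈ A then 1 else 0

def FuzzyLeftIdeal {H : Type*} (circ : H → H → Set H) (le : H → H → Prop) (f : H → ℝ) : Prop :=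
  (∀ x y : H, le x y → f y ≤ f x) ∧ ∀ x y : H, ∀ u ∈ circ x y, f y ≤ f u

def FuzzyRightIdeal {H : Type*} (circ : H → H → Set H) (le : H → H → Prop) (f : H → ℝ) : Prop :=
  (∀ x y : H, le x y → f y ≤ f x) ∧ ∀ x y : H, ∀ u ∈ circ x y, f x ≤ f u

def FuzzyIdeal {H : Type*} (circ : H → H → Set H) (le : H → H → Prop) (f : H → ℝ) : Prop :=
  FuzzyLeftIdeal circ le f ∧ FuzzyRightIdeal circ le f

def FuzzyPrimeSubset {H : Type*} (circ : H → H → Set H) (f : H → ℝ) : Prop :=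
  ∀ x y : H, ∀ u ∈ circ x y, f u ≤ max (f x) (f y)

def FuzzyPrimeIdeal {H : Type*} (circ : H → H → Set H) (le : H → H → Prop) (f : H → ℝ) : Prop :=
  FuzzyIdeal circ le f ∧ FuzzyPrimeSubset circ f

def FuzzySemiprimeSubset {H : Type*} (circ : H → H → Set H) (f : H → ℝ) : Prop :=
  ∀ x : H, ∀ u ∈ circ x x, f u ≤ f x

def FuzzySemiprimeIdeal {H : Type*} (circ : H → H → Set H) (le : H → H → Prop) (f : H → ℝ) : Prop :=
  FuzzyIdeal circ le f ∧ FuzzySemiprimeSubset circ f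

theorem charFun_le_charFun_iff {H : Type*} {A : Set H} {x y : H} :
    charFun A x ≤ charFun A y ↔ (x ∈ A → y ∈ A) := by
  by_cases hx : x ∈ A <;> by_cases hy : y ∈ A <;> simp [charFun, hx, hy]

theorem charFun_antitone_of_downward_closed {H : Type*} {le : H → H → Prop} {A : Set H}
    (hdown : ∀ a ∈ A, ∀ b : H, le b a → b ∈ A) (x y : H) (hxy : le x y) :
    charFun A y ≤ charFun A x :=
  charFun_le_charFun_iff.mpr fun hy => hdown y hy x hxy

theorem IsLeftIdeal.fuzzyLeftIdeal_charFun {H : Type*} {circ : H → H → Set H}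
    {le : H → H → Prop} {A : Set H} (hA : IsLeftIdeal circ le A) :
    FuzzyLeftIdeal circ le (charFun A) :=
  ⟨charFun_antitone_of_downward_closed hA.2.2, fun x y _ hu =>
    charFun_le_charFun_iff.mpr fun hy => hA.2.1 ⟨x, trivial, y, hy, hu⟩⟩

theorem IsRightIdeal.fuzzyRightIdeal_charFun {H : Type*} {circ : H → H → Set H}
    {le : H → H → Prop} {A : Set H} (hA : IsRightIdeal circ le A) :
    FuzzyRightIdeal circ le (charFun A) :=
  ⟨charFun_antitone_of_downward_closed hA.2.2, fun x y _ hu =>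
    charFun_le_charFun_iff.mpr fun hx => hA.2.1 ⟨x, hx, y, trivial, hu⟩⟩

theorem IsPrimeSubset.mem_or_mem_of_mem_circ {H : Type*} {circ : H → H → Set H} {A : Set H}
    (hA : IsPrimeSubset circ A) {x y u : H} (hu : u ∈ circ x y) (huA : u ∈ A) :
    x ∈ A ∨ y ∈ A := by
  refine hA.2.1 x y ((hA.2.2 x y).resolve_right fun hempty => ?_)
  exact hempty.subset ⟨hu, huA⟩

theorem IsPrimeSubset.fuzzyPrimeSubset_charFun {H : Type*} {circ : H → H → Set H}
    {A : Set H} (hA : IsPrimeSubset circ A) : FuzzyPrimeSubset circ (charFun A) := by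
  intro x y u hu
  simp only [le_max_iff, charFun_le_charFun_iff]
  by_cases huA : u ∈ A
  · rcases hA.mem_or_mem_of_mem_circ hu huA with hx | hy
    exacts [Or.inl fun _ => hx, Or.inr fun _ => hy]
  · exact Or.inl fun h => absurd h huA

theorem stmt_11_general {H : Type*} (circ : H → H → Set H)
    (le : H → H → Prop)
    (A : Set H) (hA : IsPrimeIdeal circ le A) :
    FuzzyPrimeIdeal circ le (charFun A) :=
  ⟨⟨hA.1.1.fuzzyLeftIdeal_charFun, hA.1.2.fuzzyRightIdeal_charFun⟩,
    hA.2.fuzzyPrimeSubset_charFun⟩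

theorem stmt_11 {H : Type*} [Nonempty H] (circ : H → H → Set H)
    (hne : ∀ a b : H, (circ a b).Nonempty) (le : H → H → Prop)
    (A : Set H) (hA : IsPrimeIdeal circ le A) :
    FuzzyPrimeIdeal circ le (charFun A) :=
  stmt_11_general circ le A hA
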